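/- For every t ≥ 0 and every x ∈ ℝ one has the identity X(t, Z^0(x) − a·t) − λ̄^0_−·t = ψ(x) − (1/2a)·(H(Z^0(x) − 2a·t) − H̄^−); consequently X(t, Z^0(x) − a·t) − λ̄^0_−·t → ψ(x) and X(t, Z^0(x) + a·t) − μ̄^0_+·t → φ(x) as t → +∞, pointwise on ℝ and uniformly on every compact subset of ℝ. -/

import Mathlib

/-!
The substitution `ξ = Z⁰(y)`, `dξ = 2a / (μ⁰ - λ⁰)(y) dy`, turns `∫₀^{Z⁰(x)} (μ⁰ - λ⁰) ∘ X⁰` into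
`2a·x`. The density is merely bounded and measurable, so the substitution is justified by the fact
that `Z⁰` pushes the measure with density `2a / (μ⁰ - λ⁰)` forward to Lebesgue measure. Splitting
`X(t, Z⁰(x) ∓ a t)` with this identity expresses it through `H` and `I` as claimed, and the limits
follow since `Z⁰(x) ∓ 2a t → ∓∞` uniformly for `x` in a compact set.
-/

open MeasureTheory Filter Set Topology

theorem Measurable.intervalIntegrable_of_bddAbove_of_bddBelow {g : ℝ → ℝ} (hg : Measurable g)
    (hgu : BddAbove (range g)) (hgl : BddBelow (range g)) (u v : ℝ) :
    IntervalIntegrable g volume u v := by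
  obtain ⟨M, hM⟩ := (isBounded_iff_bddBelow_bddAbove.2 ⟨hgl, hgu⟩).exists_norm_le
  rw [intervalIntegrable_iff]
  exact Measure.integrableOn_of_bounded measure_Ioc_lt_top.ne hg.aestronglyMeasurable
    (ae_of_all _ fun x => hM _ (mem_range_self x))

theorem map_withDensity_eq_volume_of_sub_eq_integral (e : ℝ ≃o ℝ) {f : ℝ → ℝ}
    (hf : ∀ x, 0 ≤ f x) (hfi : ∀ u v, IntervalIntegrable f volume u v)
    (he : ∀ u v, e v - e u = ∫ x in u..v, f x) :
    (volume.withDensity fun x => ENNReal.ofReal (f x)).map e = volume := by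
  refine (Measure.ext_of_Ioc _ _ fun c d hcd => ?_).symm
  obtain ⟨c, rfl⟩ := e.surjective c
  obtain ⟨d, rfl⟩ := e.surjective d
  rw [Measure.map_apply e.continuous.measurable measurableSet_Ioc, OrderIso.preimage_Ioc,
    e.symm_apply_apply, e.symm_apply_apply, withDensity_apply _ measurableSet_Ioc,
    ← ofReal_integral_eq_lintegral_ofReal ((hfi _ _).1) (ae_of_all _ fun x => hf x),
    ← intervalIntegral.integral_of_le (e.lt_iff_lt.1 hcd).le, ← he, Real.volume_Ioc]

theorem integral_comp_orderIso_eq_integral_smul {E : Type*} [NormedAddCommGroup E]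
    [NormedSpace ℝ E] (e : ℝ ≃o ℝ) {f : ℝ → ℝ} (hfm : Measurable f) (hf : ∀ x, 0 ≤ f x)
    (hfi : ∀ u v, IntervalIntegrable f volume u v) (he : ∀ u v, e v - e u = ∫ x in u..v, f x)
    (g : ℝ → E) (u v : ℝ) :
    ∫ ξ in e u..e v, g ξ = ∫ x in u..v, f x • g (e x) := by
  wlog huv : u ≤ v generalizing u v
  · rw [intervalIntegral.integral_symm, this v u (le_of_not_ge huv),
      intervalIntegral.integral_symm, neg_neg]
  have he_emb : MeasurableEmbedding e := e.toHomeomorph.measurableEmbedding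
  rw [intervalIntegral.integral_of_le (e.monotone huv), intervalIntegral.integral_of_le huv]
  conv_lhs => rw [← map_withDensity_eq_volume_of_sub_eq_integral e hf hfi he]
  rw [he_emb.setIntegral_map, OrderIso.preimage_Ioc, e.symm_apply_apply, e.symm_apply_apply,
    setIntegral_withDensity_eq_setIntegral_toReal_smul hfm.ennreal_ofReal
      (ae_of_all _ fun _ => ENNReal.ofReal_lt_top) _ measurableSet_Ioc]
  simp only [ENNReal.toReal_ofReal (hf _)]

theorem sub_eq_integral_of_eq_integral {w Z : ℝ → ℝ} {x₀ : ℝ}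
    (hw : ∀ u v, IntervalIntegrable w volume u v) (hZ : ∀ x, Z x = ∫ y in x₀..x, w y)
    (u v : ℝ) : Z v - Z u = ∫ y in u..v, w y := by
  rw [hZ, hZ, intervalIntegral.integral_interval_sub_left (hw x₀ v) (hw x₀ u)]

theorem integral_eq_of_eq_integral_sub_const {g H : ℝ → ℝ} {c y₀ : ℝ}
    (hg : ∀ u v, IntervalIntegrable g volume u v) (hH : ∀ y, H y = ∫ ξ in y₀..y, (g ξ - c))
    (y z : ℝ) : ∫ ξ in y..z, g ξ = H z - H y + c * (z - y) := by
  rw [sub_eq_integral_of_eq_integral (fun u v => (hg u v).sub intervalIntegrable_const) hH,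
    intervalIntegral.integral_sub (hg y z) intervalIntegrable_const,
    intervalIntegral.integral_const, smul_eq_mul]
  ring

theorem exists_orderIso_of_eq_integral {w Z X₀ : ℝ → ℝ} (hw0 : ∀ x, 0 ≤ w x)
    (hw : ∀ u v, IntervalIntegrable w volume u v) (hZ : ∀ x, Z x = ∫ y in 0..x, w y)
    (hXZ : ∀ x, X₀ (Z x) = x) (hZX : ∀ z, Z (X₀ z) = z) :
    ∃ e : ℝ ≃o ℝ, ⇑e = Z ∧ ⇑e.symm = X₀ := by
  have hmono : Monotone Z := fun u v huv => sub_nonneg.1 <| by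
    rw [sub_eq_integral_of_eq_integral hw hZ]
    exact intervalIntegral.integral_nonneg huv fun x _ => hw0 x
  let e := (hmono.strictMono_of_injective (Function.LeftInverse.injective hXZ)).orderIsoOfSurjective
    Z (Function.RightInverse.surjective hZX)
  exact ⟨e, rfl, funext fun z => e.symm_apply_eq.2 (hZX z).symm⟩

theorem intervalIntegrable_const_div {d : ℝ → ℝ} {c δ : ℝ} (hc : 0 ≤ c) (hδ : 0 < δ)
    (hd : Measurable d) (hdδ : ∀ x, δ ≤ d x) (u v : ℝ) :
    IntervalIntegrable (fun y => c / d y) volume u v :=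
  Measurable.intervalIntegrable_of_bddAbove_of_bddBelow (g := fun y => c / d y)
    (measurable_const.div hd)
    ⟨c / δ, forall_mem_range.2 fun y => div_le_div_of_nonneg_left hc hδ (hdδ y)⟩
    ⟨0, forall_mem_range.2 fun y => div_nonneg hc (hδ.le.trans (hdδ y))⟩ u v

theorem exists_orderIso_of_eq_integral_div {d Z X₀ : ℝ → ℝ} {c δ : ℝ} (hc : 0 ≤ c)
    (hδ : 0 < δ) (hd : Measurable d) (hdδ : ∀ x, δ ≤ d x)
    (hZ : ∀ x, Z x = ∫ y in 0..x, c / d y) (hXZ : ∀ x, X₀ (Z x) = x) (hZX : ∀ z, Z (X₀ z) = z) :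
    ∃ e : ℝ ≃o ℝ, ⇑e = Z ∧ ⇑e.symm = X₀ ∧ ∀ x, ∫ ξ in 0..Z x, d (X₀ ξ) = c * x := by
  have hd0 : ∀ y, 0 < d y := fun y => hδ.trans_le (hdδ y)
  have hw0 : ∀ y, 0 ≤ c / d y := fun y => div_nonneg hc (hd0 y).le
  have hw := intervalIntegrable_const_div hc hδ hd hdδ
  obtain ⟨e, rfl, rfl⟩ := exists_orderIso_of_eq_integral hw0 hw hZ hXZ hZX
  have he0 : e 0 = 0 := by rw [hZ, intervalIntegral.integral_same]
  refine ⟨e, rfl, rfl, fun x => ?_⟩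
  calc ∫ ξ in 0..e x, d (e.symm ξ)
      = ∫ ξ in e 0..e x, d (e.symm ξ) := by rw [he0]
    _ = ∫ y in 0..x, (c / d y) • d (e.symm (e y)) :=
        integral_comp_orderIso_eq_integral_smul e (measurable_const.div hd) hw0 hw
          (sub_eq_integral_of_eq_integral hw hZ) _ 0 x
    _ = ∫ _ in 0..x, c := intervalIntegral.integral_congr fun y _ => by
        rw [e.symm_apply_apply, smul_eq_mul, div_mul_cancel₀ _ (hd0 y).ne']
    _ = c * x := by simp [mul_comm]

theorem tendsto_add_mul_fst_atTop {α : Type*} {g : α → ℝ} {s : Set α} (hg : BddBelow (g '' s))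
    {c : ℝ} (hc : 0 < c) :
    Tendsto (fun p : ℝ × α => g p.2 + c * p.1) (atTop ×ˢ 𝓟 s) atTop := by
  obtain ⟨C, hC⟩ := hg
  exact tendsto_atTop_add_left_of_le' _ C
    ((eventually_principal.2 fun x hx => hC (mem_image_of_mem g hx)).prod_inr _)
    (tendsto_fst.const_mul_atTop hc)

theorem tendsto_sub_mul_fst_atBot {α : Type*} {g : α → ℝ} {s : Set α} (hg : BddAbove (g '' s))
    {c : ℝ} (hc : 0 < c) :
    Tendsto (fun p : ℝ × α => g p.2 - c * p.1) (atTop ×ˢ 𝓟 s) atBot := by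
  obtain ⟨C, hC⟩ := hg
  simp_rw [sub_eq_add_neg]
  exact tendsto_atBot_add_left_of_ge' _ C
    ((eventually_principal.2 fun x hx => hC (mem_image_of_mem g hx)).prod_inr _)
    (tendsto_neg_atTop_atBot.comp (tendsto_fst.const_mul_atTop hc))

theorem tendstoUniformlyOn_of_eq_add_mul_sub {ι α : Type*} {p : Filter ι} {l : Filter ℝ}
    {s : Set α} {F : ι → α → ℝ} {ψ : α → ℝ} {G : ℝ → ℝ} {φ : ι → α → ℝ} {k L : ℝ}
    (hF : ∀ i x, F i x = ψ x + k * (G (φ i x) - L)) (hG : Tendsto G l (𝓝 L))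
    (hφ : Tendsto (fun q : ι × α => φ q.1 q.2) (p ×ˢ 𝓟 s) l) :
    TendstoUniformlyOn F ψ p s := by
  rw [tendstoUniformlyOn_iff_tendsto, Metric.uniformity_eq_comap_nhds_zero, tendsto_comap_iff]
  have h := (((hG.comp hφ).sub_const L).const_mul k).abs
  simpa [Function.comp_def, hF, Real.dist_eq] using h

theorem stmt_17
    (a : ℝ) (ha : 0 < a)
    (lam0 mu0 : ℝ → ℝ) (hlm : Measurable lam0) (hmm : Measurable mu0)
    (hlbdd : BddAbove (Set.range lam0)) (hlbdd' : BddBelow (Set.range lam0))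
    (hmbdd : BddAbove (Set.range mu0)) (hmbdd' : BddBelow (Set.range mu0))
    (hsep : sSup (Set.range lam0) < sInf (Set.range mu0))
    (lbar mbar : ℝ)
    (Z0 X0 : ℝ → ℝ)
    (hZ0 : ∀ x, Z0 x = ∫ ξ in (0:ℝ)..x, 2 * a / (mu0 ξ - lam0 ξ))
    (hX0Z0 : ∀ x, X0 (Z0 x) = x) (hZ0X0 : ∀ z, Z0 (X0 z) = z)
    (X : ℝ → ℝ → ℝ)
    (hX : ∀ t z, X t z = (1 / (2 * a)) * (∫ ξ in (0:ℝ)..(z + a * t), mu0 (X0 ξ))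
        - (1 / (2 * a)) * (∫ ξ in (0:ℝ)..(z - a * t), lam0 (X0 ξ)))
    (H I : ℝ → ℝ)
    (hH : ∀ y, H y = ∫ ξ in (1:ℝ)..y, (lam0 (X0 ξ) - lbar))
    (hI : ∀ y, I y = ∫ ξ in (1:ℝ)..y, (mu0 (X0 ξ) - mbar))
    (Hbar Ibar : ℝ)
    (hHbar : Tendsto H atBot (nhds Hbar))
    (hIbar : Tendsto I atTop (nhds Ibar))
    (ψ φ : ℝ → ℝ)
    (hψ : ∀ x, ψ x = x + (1 / (2 * a)) * (H (Z0 x) - Hbar))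
    (hφ : ∀ x, φ x = x - (1 / (2 * a)) * (I (Z0 x) - Ibar)) :
    (∀ t, 0 ≤ t → ∀ x : ℝ,
      X t (Z0 x - a * t) - lbar * t
        = ψ x - (1 / (2 * a)) * (H (Z0 x - 2 * a * t) - Hbar)) ∧
    (∀ x : ℝ, Tendsto (fun t => X t (Z0 x - a * t) - lbar * t) atTop (nhds (ψ x))) ∧
    (∀ s : Set ℝ, IsCompact s → TendstoUniformlyOn
        (fun t x => X t (Z0 x - a * t) - lbar * t) ψ atTop s) ∧
    (∀ x : ℝ, Tendsto (fun t => X t (Z0 x + a * t) - mbar * t) atTop (nhds (φ x))) ∧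
    (∀ s : Set ℝ, IsCompact s → TendstoUniformlyOn
        (fun t x => X t (Z0 x + a * t) - mbar * t) φ atTop s) := by
  have hgap : ∀ x, sInf (range mu0) - sSup (range lam0) ≤ mu0 x - lam0 x := fun x =>
    sub_le_sub (csInf_le hmbdd' (mem_range_self x)) (le_csSup hlbdd (mem_range_self x))
  obtain ⟨e, rfl, rfl, hkey⟩ := exists_orderIso_of_eq_integral_div (by positivity)
    (sub_pos.2 hsep) (hmm.sub hlm) hgap hZ0 hX0Z0 hZ0X0
  have hlamX : ∀ u v, IntervalIntegrable (fun ξ => lam0 (e.symm ξ)) volume u v :=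
    (hlm.comp e.symm.continuous.measurable).intervalIntegrable_of_bddAbove_of_bddBelow
    (hlbdd.mono (range_comp_subset_range _ _)) (hlbdd'.mono (range_comp_subset_range _ _))
  have hmuX : ∀ u v, IntervalIntegrable (fun ξ => mu0 (e.symm ξ)) volume u v :=
    (hmm.comp e.symm.continuous.measurable).intervalIntegrable_of_bddAbove_of_bddBelow
    (hmbdd.mono (range_comp_subset_range _ _)) (hmbdd'.mono (range_comp_subset_range _ _))
  have hlamH := integral_eq_of_eq_integral_sub_const hlamX hH
  have hmuI := integral_eq_of_eq_integral_sub_const hmuX hI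
  have hdiff : ∀ x, (∫ ξ in 0..e x, mu0 (e.symm ξ)) - ∫ ξ in 0..e x, lam0 (e.symm ξ) = 2 * a * x :=
    fun x => (intervalIntegral.integral_sub (hmuX _ _) (hlamX _ _)).symm.trans (hkey x)
  have hleft : ∀ t x, X t (e x - a * t) - lbar * t
      = ψ x - (1 / (2 * a)) * (H (e x - 2 * a * t) - Hbar) := by
    intro t x
    rw [hX, hψ, show e x - a * t + a * t = e x by ring,
      show e x - a * t - a * t = e x - 2 * a * t by ring]
    field_simp
    linear_combination hdiff x + hlamH 0 (e x) - hlamH 0 (e x - 2 * a * t)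
  have hright : ∀ t x, X t (e x + a * t) - mbar * t
      = φ x + (1 / (2 * a)) * (I (e x + 2 * a * t) - Ibar) := by
    intro t x
    rw [hX, hφ, show e x + a * t + a * t = e x + 2 * a * t by ring,
      show e x + a * t - a * t = e x by ring]
    field_simp
    linear_combination hdiff x + hmuI 0 (e x + 2 * a * t) - hmuI 0 (e x)
  have hleft_unif : ∀ s : Set ℝ, IsCompact s → TendstoUniformlyOn
      (fun t x => X t (e x - a * t) - lbar * t) ψ atTop s := fun s hs =>
    tendstoUniformlyOn_of_eq_add_mul_sub (k := -(1 / (2 * a)))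
      (fun t x => by rw [hleft]; ring) hHbar
      (tendsto_sub_mul_fst_atBot (hs.bddAbove_image e.continuous.continuousOn) (mul_pos two_pos ha))
  have hright_unif : ∀ s : Set ℝ, IsCompact s → TendstoUniformlyOn
      (fun t x => X t (e x + a * t) - mbar * t) φ atTop s := fun s hs =>
    tendstoUniformlyOn_of_eq_add_mul_sub (k := 1 / (2 * a))
      (fun t x => by rw [hright]) hIbar
      (tendsto_add_mul_fst_atTop (hs.bddBelow_image e.continuous.continuousOn) (mul_pos two_pos ha))
  exact ⟨fun t _ x => hleft t x, fun x => (hleft_unif _ isCompact_singleton).tendsto_at rfl,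
    hleft_unif, fun x => (hright_unif _ isCompact_singleton).tendsto_at rfl, hright_unif⟩
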